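/- In the double cross product B⋈H of a matched pair of monoidal Hom-Hopf algebras, the product is Hom-associative: for all a,b,c ∈ B and h,g,f ∈ H, (β(a)⋉α(h))((b⋉g)(c⋉f)) = ((a⋉h)(b⋉g))(β(c)⋉α(f)). -/
import Mathlib


open TensorProduct LinearMap

/-- A unital monoidal Hom-associative algebra. -/
structure HomAlg (k : Type*) [Field k] (A : Type*) [AddCommGroup A] [Module k A] where
  au : A ≃ₗ[k] A
  mul : A →ₗ[k] A →ₗ[k] A
  one : A
  hom_assoc : ∀ x y z : A, mul (au x) (mul y z) = mul (mul x y) (au z)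
  one_mul' : ∀ x : A, mul one x = au x
  mul_one' : ∀ x : A, mul x one = au x
  au_mul : ∀ x y : A, au (mul x y) = mul (au x) (au y)
  au_one : au one = one

/-- A counital monoidal Hom-coassociative coalgebra. -/
structure HomCoalg (k : Type*) [Field k] (C : Type*) [AddCommGroup C] [Module k C] where
  au : C ≃ₗ[k] C
  comul : C →ₗ[k] C ⊗[k] C
  counit : C →ₗ[k] k
  hom_coassoc : (TensorProduct.map au.symm.toLinearMap comul) ∘ₗ comul
    = (TensorProduct.assoc k C C C).toLinearMap ∘ₗ (TensorProduct.map comul au.symm.toLinearMap) ∘ₗ comul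
  counit_comul : ∀ c : C,
    (TensorProduct.lid k C) ((TensorProduct.map counit LinearMap.id) (comul c)) = au.symm c
  comul_counit : ∀ c : C,
    (TensorProduct.rid k C) ((TensorProduct.map LinearMap.id counit) (comul c)) = au.symm c
  comul_au : ∀ c : C, comul (au c) = (TensorProduct.map au.toLinearMap au.toLinearMap) (comul c)
  counit_au : ∀ c : C, counit (au c) = counit c

/-- A monoidal Hom-bialgebra. -/
structure HomBialg (k : Type*) [Field k] (H : Type*) [AddCommGroup H] [Module k H]
    extends HomAlg k H, HomCoalg k H where
  comul_mul : ∀ x y : H, comul (mul x y)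
    = (TensorProduct.map (TensorProduct.lift mul) (TensorProduct.lift mul))
        ((TensorProduct.tensorTensorTensorComm k H H H H) (comul x ⊗ₜ[k] comul y))
  comul_one : comul one = one ⊗ₜ[k] one
  counit_mul : ∀ x y : H, counit (mul x y) = counit x * counit y
  counit_one : counit one = 1

/-- A monoidal Hom-Hopf algebra. -/
structure HomHopf (k : Type*) [Field k] (H : Type*) [AddCommGroup H] [Module k H]
    extends HomBialg k H where
  S : H →ₗ[k] H
  S_au : S ∘ₗ au.toLinearMap = au.toLinearMap ∘ₗ S
  S_mul_id : ∀ x : H,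
    TensorProduct.lift mul ((TensorProduct.map S LinearMap.id) (comul x)) = counit x • one
  id_mul_S : ∀ x : H,
    TensorProduct.lift mul ((TensorProduct.map LinearMap.id S) (comul x)) = counit x • one

section DCP

variable {k : Type*} [Field k] {B H : Type*}
  [AddCommGroup B] [Module k B] [AddCommGroup H] [Module k H]

/-- The double cross product multiplication on `B ⊗ H`:
`(a⋉h)(b⋉g) = Σ a(h₁▷b₁) ⋉ (h₂◁b₂)g`. -/
noncomputable def dcpMulT
    (mulB : B →ₗ[k] B →ₗ[k] B) (comulB : B →ₗ[k] B ⊗[k] B)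
    (mulH : H →ₗ[k] H →ₗ[k] H) (comulH : H →ₗ[k] H ⊗[k] H)
    (actL : H →ₗ[k] B →ₗ[k] B) (actR : H →ₗ[k] B →ₗ[k] H) :
    (B ⊗[k] H) ⊗[k] (B ⊗[k] H) →ₗ[k] B ⊗[k] H :=
  (TensorProduct.map
      ((TensorProduct.lift mulB) ∘ₗ (LinearMap.lTensor B (TensorProduct.lift actL))
        ∘ₗ (TensorProduct.assoc k B H B).toLinearMap)
      ((TensorProduct.lift mulH) ∘ₗ (LinearMap.rTensor H (TensorProduct.lift actR))
        ∘ₗ (TensorProduct.assoc k H B H).symm.toLinearMap))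
  ∘ₗ (TensorProduct.tensorTensorTensorComm k (B ⊗[k] H) H B (B ⊗[k] H)).toLinearMap
  ∘ₗ (TensorProduct.map
        ((TensorProduct.assoc k B H H).symm.toLinearMap ∘ₗ (LinearMap.lTensor B comulH))
        ((TensorProduct.assoc k B B H).toLinearMap ∘ₗ (LinearMap.rTensor H comulB)))

/-- The tensor coproduct on `B ⊗ H`: `Δ(a⋉h) = (a₁⋉h₁) ⊗ (a₂⋉h₂)`. -/
noncomputable def dcpComul
    (comulB : B →ₗ[k] B ⊗[k] B) (comulH : H →ₗ[k] H ⊗[k] H) :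
    B ⊗[k] H →ₗ[k] (B ⊗[k] H) ⊗[k] (B ⊗[k] H) :=
  (TensorProduct.tensorTensorTensorComm k B B H H).toLinearMap
    ∘ₗ (TensorProduct.map comulB comulH)

/-- The double cross product antipode:
`S(a⋉h) = Σ S_H(h₂)▷S_B(a₂) ⋉ S_H(h₁)◁S_B(a₁)`. -/
noncomputable def dcpS
    (comulB : B →ₗ[k] B ⊗[k] B) (S_B : B →ₗ[k] B)
    (comulH : H →ₗ[k] H ⊗[k] H) (S_H : H →ₗ[k] H)
    (actL : H →ₗ[k] B →ₗ[k] B) (actR : H →ₗ[k] B →ₗ[k] H) :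
    B ⊗[k] H →ₗ[k] B ⊗[k] H :=
  (TensorProduct.map
      ((TensorProduct.lift actL) ∘ₗ (TensorProduct.map S_H S_B)
        ∘ₗ (TensorProduct.comm k B H).toLinearMap)
      ((TensorProduct.lift actR) ∘ₗ (TensorProduct.map S_H S_B)
        ∘ₗ (TensorProduct.comm k B H).toLinearMap))
  ∘ₗ (TensorProduct.comm k (B ⊗[k] H) (B ⊗[k] H)).toLinearMap
  ∘ₗ (dcpComul comulB comulH)

/-- A matched pair of monoidal Hom-Hopf algebras `((B,β),(H,α))` with actions
`▷ = actL : H ⊗ B → B` and `◁ = actR : H ⊗ B → H`. -/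
structure MatchedPair (Bb : HomHopf k B) (Hh : HomHopf k H)
    (actL : H →ₗ[k] B →ₗ[k] B) (actR : H →ₗ[k] B →ₗ[k] H) : Prop where
  -- (H,α) is a right (B,β)-Hom-module:
  actR_one : ∀ h : H, actR h Bb.one = Hh.au h
  actR_assoc : ∀ (h : H) (a b : B),
    actR (Hh.au h) (Bb.mul a b) = actR (actR h a) (Bb.au b)
  actR_au : ∀ (h : H) (a : B), Hh.au (actR h a) = actR (Hh.au h) (Bb.au a)
  -- (B,β) is a left (H,α)-Hom-module:
  actL_one : ∀ b : B, actL Hh.one b = Bb.au b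
  actL_assoc : ∀ (h g : H) (b : B),
    actL (Hh.au h) (actL g b) = actL (Hh.mul h g) (Bb.au b)
  actL_au : ∀ (h : H) (b : B), Bb.au (actL h b) = actL (Hh.au h) (Bb.au b)
  -- both are Hom-module coalgebra actions:
  comul_actR : ∀ (h : H) (a : B), Hh.comul (actR h a)
    = (TensorProduct.map (TensorProduct.lift actR) (TensorProduct.lift actR))
        ((TensorProduct.tensorTensorTensorComm k H H B B) (Hh.comul h ⊗ₜ[k] Bb.comul a))
  counit_actR : ∀ (h : H) (a : B), Hh.counit (actR h a) = Hh.counit h * Bb.counit a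
  comul_actL : ∀ (h : H) (a : B), Bb.comul (actL h a)
    = (TensorProduct.map (TensorProduct.lift actL) (TensorProduct.lift actL))
        ((TensorProduct.tensorTensorTensorComm k H H B B) (Hh.comul h ⊗ₜ[k] Bb.comul a))
  counit_actL : ∀ (h : H) (a : B), Bb.counit (actL h a) = Hh.counit h * Bb.counit a
  -- matched-pair condition (a): `(hg)◁a = Σ (h◁(g₁▷β⁻¹(a₁)))(α(g₂)◁a₂)`
  condA : ∀ (h g : H) (a : B), actR (Hh.mul h g) a
    = TensorProduct.lift Hh.mul
        ((TensorProduct.map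
            ((actR h) ∘ₗ (TensorProduct.lift actL)
              ∘ₗ (LinearMap.lTensor H Bb.au.symm.toLinearMap))
            (TensorProduct.lift (actR ∘ₗ Hh.au.toLinearMap)))
          ((TensorProduct.tensorTensorTensorComm k H H B B)
            (Hh.comul g ⊗ₜ[k] Bb.comul a)))
  condA_one : ∀ a : B, actR Hh.one a = Bb.counit a • Hh.one
  -- matched-pair condition (b): `h▷(ab) = Σ (h₁▷β(a₁))((α⁻¹(h₂)◁a₂)▷b)`
  condB : ∀ (h : H) (a b : B), actL h (Bb.mul a b)
    = TensorProduct.lift Bb.mul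
        ((TensorProduct.map
            ((TensorProduct.lift actL) ∘ₗ (LinearMap.lTensor H Bb.au.toLinearMap))
            ((actL.flip b) ∘ₗ (TensorProduct.lift (actR ∘ₗ Hh.au.symm.toLinearMap))))
          ((TensorProduct.tensorTensorTensorComm k H H B B)
            (Hh.comul h ⊗ₜ[k] Bb.comul a)))
  condB_one : ∀ h : H, actL h Bb.one = Hh.counit h • Bb.one
  -- matched-pair condition (c): `Σ (h₁◁a₁)⊗(h₂▷a₂) = Σ (h₂◁a₂)⊗(h₁▷a₁)`
  condC : ∀ (h : H) (a : B),
    (TensorProduct.map (TensorProduct.lift actR) (TensorProduct.lift actL))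
        ((TensorProduct.tensorTensorTensorComm k H H B B) (Hh.comul h ⊗ₜ[k] Bb.comul a))
    = (TensorProduct.map (TensorProduct.lift actR) (TensorProduct.lift actL))
        ((TensorProduct.comm k (H ⊗[k] B) (H ⊗[k] B))
          ((TensorProduct.tensorTensorTensorComm k H H B B)
            (Hh.comul h ⊗ₜ[k] Bb.comul a)))

end DCP

section Aux

variable {k : Type*} [Field k] {B H : Type*}
  [AddCommGroup B] [Module k B] [AddCommGroup H] [Module k H]

/-- A chosen finite presentation of the comultiplication of an element. -/
noncomputable def Drep {A : Type*} [AddCommGroup A] [Module k A] (Aa : HomHopf k A) (x : A) :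
    Finset (A × A) :=
  (TensorProduct.exists_finset (Aa.comul x)).choose

lemma Drep_spec {A : Type*} [AddCommGroup A] [Module k A] (Aa : HomHopf k A) (x : A) :
    Aa.comul x = ∑ p ∈ Drep Aa x, p.1 ⊗ₜ[k] p.2 :=
  (TensorProduct.exists_finset (Aa.comul x)).choose_spec

section GenHopf
variable {A : Type*} [AddCommGroup A] [Module k A] (Aa : HomHopf k A)

lemma rep_mul (x y : A) {ι κ : Type*} {s : Finset ι} {t : Finset κ}
    {x1 x2 : ι → A} {y1 y2 : κ → A}
    (hx : Aa.comul x = ∑ i ∈ s, x1 i ⊗ₜ[k] x2 i)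
    (hy : Aa.comul y = ∑ j ∈ t, y1 j ⊗ₜ[k] y2 j) :
    Aa.comul (Aa.mul x y)
      = ∑ z ∈ s ×ˢ t, Aa.mul (x1 z.1) (y1 z.2) ⊗ₜ[k] Aa.mul (x2 z.1) (y2 z.2) := by
  rw [Aa.comul_mul, hx, hy, Finset.sum_product]
  simp [TensorProduct.sum_tmul, TensorProduct.tmul_sum, map_sum]
  exact Finset.sum_comm

lemma rep_au (x : A) {ι : Type*} {s : Finset ι} {x1 x2 : ι → A}
    (hx : Aa.comul x = ∑ i ∈ s, x1 i ⊗ₜ[k] x2 i) :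
    Aa.comul (Aa.au x) = ∑ i ∈ s, Aa.au (x1 i) ⊗ₜ[k] Aa.au (x2 i) := by
  rw [Aa.comul_au, hx]
  simp [map_sum]

end GenHopf

section MP
variable (Bb : HomHopf k B) (Hh : HomHopf k H)
  (actL : H →ₗ[k] B →ₗ[k] B) (actR : H →ₗ[k] B →ₗ[k] H)

lemma dcp_apply (a b : B) (h g : H) {ι κ : Type*} {s : Finset ι} {t : Finset κ}
    {h1 h2 : ι → H} {b1 b2 : κ → B}
    (hh : Hh.comul h = ∑ i ∈ s, h1 i ⊗ₜ[k] h2 i)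
    (hb : Bb.comul b = ∑ j ∈ t, b1 j ⊗ₜ[k] b2 j) :
    dcpMulT Bb.mul Bb.comul Hh.mul Hh.comul actL actR ((a ⊗ₜ[k] h) ⊗ₜ[k] (b ⊗ₜ[k] g))
      = ∑ i ∈ s, ∑ j ∈ t,
          (Bb.mul a (actL (h1 i) (b1 j))) ⊗ₜ[k] (Hh.mul (actR (h2 i) (b2 j)) g) := by
  simp [dcpMulT, hh, hb, map_sum, TensorProduct.sum_tmul, TensorProduct.tmul_sum]
  exact Finset.sum_comm

variable {Bb Hh actL actR} (mp : MatchedPair Bb Hh actL actR)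
include mp

lemma rep_actL (h : H) (a : B) {ι κ : Type*} {s : Finset ι} {t : Finset κ}
    {h1 h2 : ι → H} {a1 a2 : κ → B}
    (hh : Hh.comul h = ∑ i ∈ s, h1 i ⊗ₜ[k] h2 i)
    (ha : Bb.comul a = ∑ j ∈ t, a1 j ⊗ₜ[k] a2 j) :
    Bb.comul (actL h a)
      = ∑ z ∈ s ×ˢ t, actL (h1 z.1) (a1 z.2) ⊗ₜ[k] actL (h2 z.1) (a2 z.2) := by
  rw [mp.comul_actL, hh, ha, Finset.sum_product]
  simp [TensorProduct.sum_tmul, TensorProduct.tmul_sum, map_sum]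
  exact Finset.sum_comm

lemma rep_actR (h : H) (a : B) {ι κ : Type*} {s : Finset ι} {t : Finset κ}
    {h1 h2 : ι → H} {a1 a2 : κ → B}
    (hh : Hh.comul h = ∑ i ∈ s, h1 i ⊗ₜ[k] h2 i)
    (ha : Bb.comul a = ∑ j ∈ t, a1 j ⊗ₜ[k] a2 j) :
    Hh.comul (actR h a)
      = ∑ z ∈ s ×ˢ t, actR (h1 z.1) (a1 z.2) ⊗ₜ[k] actR (h2 z.1) (a2 z.2) := by
  rw [mp.comul_actR, hh, ha, Finset.sum_product]
  simp [TensorProduct.sum_tmul, TensorProduct.tmul_sum, map_sum]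
  exact Finset.sum_comm

lemma rep_condB (h : H) (x y : B) {ι κ : Type*} {s : Finset ι} {t : Finset κ}
    {h1 h2 : ι → H} {x1 x2 : κ → B}
    (hh : Hh.comul h = ∑ i ∈ s, h1 i ⊗ₜ[k] h2 i)
    (hx : Bb.comul x = ∑ j ∈ t, x1 j ⊗ₜ[k] x2 j) :
    actL h (Bb.mul x y)
      = ∑ z ∈ s ×ˢ t,
          Bb.mul (actL (h1 z.1) (Bb.au (x1 z.2)))
            (actL (actR (Hh.au.symm (h2 z.1)) (x2 z.2)) y) := by
  rw [mp.condB, hh, hx, Finset.sum_product]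
  simp [TensorProduct.sum_tmul, TensorProduct.tmul_sum, map_sum]
  exact Finset.sum_comm

lemma rep_condA (h g : H) (a : B) {ι κ : Type*} {s : Finset ι} {t : Finset κ}
    {g1 g2 : ι → H} {a1 a2 : κ → B}
    (hg : Hh.comul g = ∑ i ∈ s, g1 i ⊗ₜ[k] g2 i)
    (ha : Bb.comul a = ∑ j ∈ t, a1 j ⊗ₜ[k] a2 j) :
    actR (Hh.mul h g) a
      = ∑ z ∈ s ×ˢ t,
          Hh.mul (actR h (actL (g1 z.1) (Bb.au.symm (a1 z.2))))
            (actR (Hh.au (g2 z.1)) (a2 z.2)) := by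
  rw [mp.condA, hg, ha, Finset.sum_product]
  simp [TensorProduct.sum_tmul, TensorProduct.tmul_sum, map_sum]
  exact Finset.sum_comm

end MP

end Aux

section Assemble

variable {k : Type*} [Field k] {B H : Type*}
  [AddCommGroup B] [Module k B] [AddCommGroup H] [Module k H]

variable (Bb : HomHopf k B) (Hh : HomHopf k H)
  (actL : H →ₗ[k] B →ₗ[k] B) (actR : H →ₗ[k] B →ₗ[k] H)

/-- The common 12-linear "body" of both sides of Hom-associativity. -/
noncomputable def phi (a : B) (f : H) (h1 h2 h3 : H) (b1 b2 b3 : B)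
    (g1 g2 g3 : H) (c1 c2 c3 : B) : B ⊗[k] H :=
  (Bb.mul (Bb.mul a (actL h1 b1)) (actL (actR h2 b2) (actL g1 c1))) ⊗ₜ[k]
    (Hh.mul (actR (actR h3 b3) (actL g2 c2)) (Hh.mul (actR g3 c3) f))

/-- Interleaving of a triple of `H`'s and a triple of `B`'s. -/
noncomputable def sigmaHB : (H ⊗[k] (H ⊗[k] H)) ⊗[k] (B ⊗[k] (B ⊗[k] B)) ≃ₗ[k]
    (H ⊗[k] B) ⊗[k] ((H ⊗[k] B) ⊗[k] (H ⊗[k] B)) :=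
  (TensorProduct.tensorTensorTensorComm k H (H ⊗[k] H) B (B ⊗[k] B)) ≪≫ₗ
    TensorProduct.congr (LinearEquiv.refl k _) (TensorProduct.tensorTensorTensorComm k H H B B)

/-- The middle permutation. -/
noncomputable def piPerm : (B ⊗[k] (H ⊗[k] H)) ⊗[k] (B ⊗[k] (B ⊗[k] H)) ≃ₗ[k]
    (B ⊗[k] (H ⊗[k] B)) ⊗[k] ((H ⊗[k] B) ⊗[k] H) :=
  (TensorProduct.congr (TensorProduct.assoc k B H H).symm (LinearEquiv.refl k _)) ≪≫ₗ
  (TensorProduct.assoc k (B ⊗[k] H) H (B ⊗[k] (B ⊗[k] H))) ≪≫ₗ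
  (TensorProduct.congr (LinearEquiv.refl k _) (TensorProduct.assoc k H B (B ⊗[k] H)).symm) ≪≫ₗ
  (TensorProduct.congr (LinearEquiv.refl k _)
    (TensorProduct.congr (TensorProduct.comm k H B) (LinearEquiv.refl k _))) ≪≫ₗ
  (TensorProduct.congr (LinearEquiv.refl k _) (TensorProduct.assoc k B H (B ⊗[k] H))) ≪≫ₗ
  (TensorProduct.assoc k (B ⊗[k] H) B (H ⊗[k] (B ⊗[k] H))).symm ≪≫ₗ
  (TensorProduct.congr (TensorProduct.assoc k B H B) (TensorProduct.assoc k H B H).symm)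

/-- The assembled 12-linear map. -/
noncomputable def Theta (a : B) (f : H) :
    ((H ⊗[k] (H ⊗[k] H)) ⊗[k] (B ⊗[k] (B ⊗[k] B))) ⊗[k]
      ((H ⊗[k] (H ⊗[k] H)) ⊗[k] (B ⊗[k] (B ⊗[k] B))) →ₗ[k] B ⊗[k] H :=
  (TensorProduct.map
      (TensorProduct.lift Bb.mul ∘ₗ TensorProduct.map (Bb.mul a) (TensorProduct.lift actL))
      (TensorProduct.lift Hh.mul ∘ₗ TensorProduct.map (TensorProduct.lift actR) (Hh.mul.flip f)))
  ∘ₗ (piPerm (k := k)).toLinearMap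
  ∘ₗ (TensorProduct.map
      ((TensorProduct.map (TensorProduct.lift actL)
          (TensorProduct.map (TensorProduct.lift actR) (TensorProduct.lift actR)))
        ∘ₗ (sigmaHB (k := k)).toLinearMap)
      ((TensorProduct.map (TensorProduct.lift actL)
          (TensorProduct.map (TensorProduct.lift actL) (TensorProduct.lift actR)))
        ∘ₗ (sigmaHB (k := k)).toLinearMap))

lemma Theta_tmul (a : B) (f : H) (h1 h2 h3 : H) (b1 b2 b3 : B) (g1 g2 g3 : H) (c1 c2 c3 : B) :
    Theta Bb Hh actL actR a f
      (((h1 ⊗ₜ[k] (h2 ⊗ₜ[k] h3)) ⊗ₜ[k] (b1 ⊗ₜ[k] (b2 ⊗ₜ[k] b3))) ⊗ₜ[k]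
        ((g1 ⊗ₜ[k] (g2 ⊗ₜ[k] g3)) ⊗ₜ[k] (c1 ⊗ₜ[k] (c2 ⊗ₜ[k] c3))))
    = phi Bb Hh actL actR a f h1 h2 h3 b1 b2 b3 g1 g2 g3 c1 c2 c3 := by
  simp [Theta, piPerm, sigmaHB, phi]

/-- Hom-coassociativity in terms of chosen representations. -/
lemma tripleEq {A : Type*} [AddCommGroup A] [Module k A] (Aa : HomHopf k A) (x : A) :
    ∑ p ∈ Drep Aa x, ∑ q ∈ Drep Aa p.1, Aa.au q.1 ⊗ₜ[k] (Aa.au q.2 ⊗ₜ[k] p.2)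
      = ∑ p ∈ Drep Aa x, ∑ q ∈ Drep Aa p.2, p.1 ⊗ₜ[k] (Aa.au q.1 ⊗ₜ[k] Aa.au q.2) := by
  have h0 := LinearMap.congr_fun Aa.hom_coassoc x
  simp only [LinearMap.coe_comp, Function.comp_apply, LinearEquiv.coe_coe] at h0
  have e1 : (TensorProduct.map Aa.au.symm.toLinearMap Aa.comul) (Aa.comul x)
      = ∑ p ∈ Drep Aa x, ∑ q ∈ Drep Aa p.2,
          Aa.au.symm p.1 ⊗ₜ[k] (q.1 ⊗ₜ[k] q.2) := by
    rw [Drep_spec Aa x, map_sum]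
    refine Finset.sum_congr rfl fun p _ => ?_
    rw [TensorProduct.map_tmul, Drep_spec Aa p.2, TensorProduct.tmul_sum]
    simp
  have e2 : (TensorProduct.assoc k A A A)
        ((TensorProduct.map Aa.comul Aa.au.symm.toLinearMap) (Aa.comul x))
      = ∑ p ∈ Drep Aa x, ∑ q ∈ Drep Aa p.1,
          q.1 ⊗ₜ[k] (q.2 ⊗ₜ[k] Aa.au.symm p.2) := by
    rw [Drep_spec Aa x, map_sum, map_sum]
    refine Finset.sum_congr rfl fun p _ => ?_
    rw [TensorProduct.map_tmul, Drep_spec Aa p.1, TensorProduct.sum_tmul, map_sum]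
    simp
  rw [e1, e2] at h0
  have h1 := congrArg
    (⇑(TensorProduct.map Aa.au.toLinearMap
        (TensorProduct.map Aa.au.toLinearMap Aa.au.toLinearMap))) h0
  simp only [map_sum, TensorProduct.map_tmul, LinearEquiv.coe_coe,
    LinearEquiv.apply_symm_apply] at h1
  exact h1.symm

end Assemble
lemma reorderL {M : Type*} [AddCommMonoid M]
    {P P' J J' R R' S S' : Type*}
    (sp : Finset P) (tp : P → Finset P') (sj : Finset J) (tj : J → Finset J')
    (sr : Finset R) (tr : R → Finset R') (ss : Finset S) (ts : S → Finset S')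
    (F : P → P' → J → J' → R → R' → S → S' → M) :
    (∑ r ∈ sr, ∑ s ∈ ss, ∑ p ∈ sp, ∑ j ∈ sj, ∑ r1 ∈ tr r, ∑ s1 ∈ ts s,
      ∑ p1 ∈ tp p, ∑ j1 ∈ tj j, F p p1 j j1 r r1 s s1)
    = ∑ p ∈ sp, ∑ p1 ∈ tp p, ∑ j ∈ sj, ∑ j1 ∈ tj j, ∑ r ∈ sr, ∑ r1 ∈ tr r,
        ∑ s ∈ ss, ∑ s1 ∈ ts s, F p p1 j j1 r r1 s s1 := by
  -- 1: swap (s,p)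
  conv_lhs => enter [2, r]; rw [Finset.sum_comm]
  -- 2: swap (r,p)
  conv_lhs => rw [Finset.sum_comm]
  -- 3: swap (s1,p1)
  conv_lhs => enter [2, p, 2, r, 2, s, 2, j, 2, r1]; rw [Finset.sum_comm]
  -- 4: swap (r1,p1)
  conv_lhs => enter [2, p, 2, r, 2, s, 2, j]; rw [Finset.sum_comm]
  -- 5: swap (j,p1)
  conv_lhs => enter [2, p, 2, r, 2, s]; rw [Finset.sum_comm]
  -- 6: swap (s,p1)
  conv_lhs => enter [2, p, 2, r]; rw [Finset.sum_comm]
  -- 7: swap (r,p1)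
  conv_lhs => enter [2, p]; rw [Finset.sum_comm]
  -- 8: swap (s,j)
  conv_lhs => enter [2, p, 2, p1, 2, r]; rw [Finset.sum_comm]
  -- 9: swap (r,j)
  conv_lhs => enter [2, p, 2, p1]; rw [Finset.sum_comm]
  -- 10: swap (s1,j1)
  conv_lhs => enter [2, p, 2, p1, 2, j, 2, r, 2, s, 2, r1]; rw [Finset.sum_comm]
  -- 11: swap (r1,j1)
  conv_lhs => enter [2, p, 2, p1, 2, j, 2, r, 2, s]; rw [Finset.sum_comm]
  -- 12: swap (s,j1)
  conv_lhs => enter [2, p, 2, p1, 2, j, 2, r]; rw [Finset.sum_comm]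
  -- 13: swap (r,j1)
  conv_lhs => enter [2, p, 2, p1, 2, j]; rw [Finset.sum_comm]
  -- 14: swap (s,r1)
  conv_lhs => enter [2, p, 2, p1, 2, j, 2, j1, 2, r]; rw [Finset.sum_comm]

lemma reorderR {M : Type*} [AddCommMonoid M]
    {P P' J J' R R' S S' : Type*}
    (sp : Finset P) (tp : P → Finset P') (sj : Finset J) (tj : J → Finset J')
    (sr : Finset R) (tr : R → Finset R') (ss : Finset S) (ts : S → Finset S')
    (F : P → P' → J → J' → R → R' → S → S' → M) :
    (∑ p ∈ sp, ∑ j ∈ sj, ∑ p1 ∈ tp p, ∑ j1 ∈ tj j, ∑ r ∈ sr, ∑ s ∈ ss,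
      ∑ r1 ∈ tr r, ∑ s1 ∈ ts s, F p p1 j j1 r r1 s s1)
    = ∑ p ∈ sp, ∑ p1 ∈ tp p, ∑ j ∈ sj, ∑ j1 ∈ tj j, ∑ r ∈ sr, ∑ r1 ∈ tr r,
        ∑ s ∈ ss, ∑ s1 ∈ ts s, F p p1 j j1 r r1 s s1 := by
  -- swap (j,p1)
  conv_lhs => enter [2, p]; rw [Finset.sum_comm]
  -- swap (s,r1)
  conv_lhs => enter [2, p, 2, p1, 2, j, 2, j1, 2, r]; rw [Finset.sum_comm]

section Main

variable {k : Type*} [Field k] {B H : Type*}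
  [AddCommGroup B] [Module k B] [AddCommGroup H] [Module k H]
  {Bb : HomHopf k B} {Hh : HomHopf k H}
  {actL : H →ₗ[k] B →ₗ[k] B} {actR : H →ₗ[k] B →ₗ[k] H}
  (mp : MatchedPair Bb Hh actL actR)
include mp

lemma lhs_natural (a b c : B) (h g f : H) :
    dcpMulT Bb.mul Bb.comul Hh.mul Hh.comul actL actR
      ((Bb.au a ⊗ₜ[k] Hh.au h) ⊗ₜ[k]
        (dcpMulT Bb.mul Bb.comul Hh.mul Hh.comul actL actR ((b ⊗ₜ[k] g) ⊗ₜ[k] (c ⊗ₜ[k] f))))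
    = ∑ r ∈ Drep Hh g, ∑ s ∈ Drep Bb c, ∑ p ∈ Drep Hh h,
      ∑ z ∈ Drep Bb b ×ˢ (Drep Hh r.1 ×ˢ Drep Bb s.1),
      ∑ w ∈ Drep Hh p.1 ×ˢ Drep Bb z.1.1,
        phi Bb Hh actL actR a f
          (Hh.au w.1.1) (Hh.au w.1.2) p.2
          (Bb.au w.2.1) (Bb.au w.2.2) z.1.2
          (Hh.au z.2.1.1) (Hh.au z.2.1.2) r.2
          (Bb.au z.2.2.1) (Bb.au z.2.2.2) s.2 := by
  rw [dcp_apply Bb Hh actL actR b c g f (Drep_spec Hh g) (Drep_spec Bb c)]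
  simp only [TensorProduct.tmul_sum, map_sum]
  refine Finset.sum_congr rfl fun r _ => Finset.sum_congr rfl fun s _ => ?_
  rw [dcp_apply Bb Hh actL actR (Bb.au a) (Bb.mul b (actL r.1 s.1)) (Hh.au h)
      (Hh.mul (actR r.2 s.2) f)
      (rep_au Hh h (Drep_spec Hh h))
      (rep_mul Bb b (actL r.1 s.1) (Drep_spec Bb b)
        (rep_actL mp r.1 s.1 (Drep_spec Hh r.1) (Drep_spec Bb s.1)))]
  refine Finset.sum_congr rfl fun p _ => Finset.sum_congr rfl fun z _ => ?_
  rw [rep_condB mp (Hh.au p.1) z.1.1 (actL z.2.1.1 z.2.2.1)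
      (rep_au Hh p.1 (Drep_spec Hh p.1)) (Drep_spec Bb z.1.1),
    map_sum, TensorProduct.sum_tmul]
  refine Finset.sum_congr rfl fun w _ => ?_
  simp only [LinearEquiv.symm_apply_apply]
  rw [Bb.hom_assoc, mp.actR_assoc]
  simp only [mp.actL_au, mp.actR_au]
  rfl

lemma rhs_natural (a b c : B) (h g f : H) :
    dcpMulT Bb.mul Bb.comul Hh.mul Hh.comul actL actR
      ((dcpMulT Bb.mul Bb.comul Hh.mul Hh.comul actL actR ((a ⊗ₜ[k] h) ⊗ₜ[k] (b ⊗ₜ[k] g)))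
        ⊗ₜ[k] (Bb.au c ⊗ₜ[k] Hh.au f))
    = ∑ p ∈ Drep Hh h, ∑ j ∈ Drep Bb b,
      ∑ z ∈ (Drep Hh p.2 ×ˢ Drep Bb j.2) ×ˢ Drep Hh g,
      ∑ s ∈ Drep Bb c,
      ∑ w ∈ Drep Hh z.2.2 ×ˢ Drep Bb s.2,
        phi Bb Hh actL actR a f
          p.1 (Hh.au z.1.1.1) (Hh.au z.1.1.2)
          j.1 (Bb.au z.1.2.1) (Bb.au z.1.2.2)
          z.2.1 (Hh.au w.1.1) (Hh.au w.1.2)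
          s.1 (Bb.au w.2.1) (Bb.au w.2.2) := by
  rw [dcp_apply Bb Hh actL actR a b h g (Drep_spec Hh h) (Drep_spec Bb b)]
  simp only [TensorProduct.sum_tmul, map_sum]
  refine Finset.sum_congr rfl fun p _ => Finset.sum_congr rfl fun j _ => ?_
  rw [dcp_apply Bb Hh actL actR (Bb.mul a (actL p.1 j.1)) (Bb.au c)
      (Hh.mul (actR p.2 j.2) g) (Hh.au f)
      (rep_mul Hh (actR p.2 j.2) g
        (rep_actR mp p.2 j.2 (Drep_spec Hh p.2) (Drep_spec Bb j.2)) (Drep_spec Hh g))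
      (rep_au Bb c (Drep_spec Bb c))]
  refine Finset.sum_congr rfl fun z _ => Finset.sum_congr rfl fun s _ => ?_
  rw [rep_condA mp (actR z.1.1.2 z.1.2.2) z.2.2 (Bb.au s.2)
      (Drep_spec Hh z.2.2) (rep_au Bb s.2 (Drep_spec Bb s.2)),
    map_sum, LinearMap.sum_apply, TensorProduct.tmul_sum]
  refine Finset.sum_congr rfl fun w _ => ?_
  simp only [LinearEquiv.symm_apply_apply]
  rw [← mp.actL_assoc, ← Hh.hom_assoc]
  simp only [mp.actR_au, mp.actL_au]
  rfl

end Main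

lemma sum_pair_swap {M : Type*} [AddCommMonoid M] {A A' C C' : Type*}
    (sa : Finset A) (ta : A → Finset A') (sc : Finset C) (tc : C → Finset C')
    (F : A → A' → C → C' → M) :
    (∑ x ∈ sa, ∑ x1 ∈ ta x, ∑ y ∈ sc, ∑ y1 ∈ tc y, F x x1 y y1)
    = ∑ y ∈ sc, ∑ y1 ∈ tc y, ∑ x ∈ sa, ∑ x1 ∈ ta x, F x x1 y y1 := by
  conv_lhs => enter [2, x]; rw [Finset.sum_comm]
  conv_lhs => rw [Finset.sum_comm]
  conv_lhs => enter [2, y, 2, x]; rw [Finset.sum_comm]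
  conv_lhs => enter [2, y]; rw [Finset.sum_comm]

lemma reorderBlocks {M : Type*} [AddCommMonoid M]
    {P P' J J' R R' S S' : Type*}
    (sp : Finset P) (tp : P → Finset P') (sj : Finset J) (tj : J → Finset J')
    (sr : Finset R) (tr : R → Finset R') (ss : Finset S) (ts : S → Finset S')
    (F : P → P' → J → J' → R → R' → S → S' → M) :
    (∑ p ∈ sp, ∑ p1 ∈ tp p, ∑ j ∈ sj, ∑ j1 ∈ tj j, ∑ r ∈ sr, ∑ r1 ∈ tr r,
      ∑ s ∈ ss, ∑ s1 ∈ ts s, F p p1 j j1 r r1 s s1)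
    = ∑ s ∈ ss, ∑ s1 ∈ ts s, ∑ r ∈ sr, ∑ r1 ∈ tr r, ∑ j ∈ sj, ∑ j1 ∈ tj j,
        ∑ p ∈ sp, ∑ p1 ∈ tp p, F p p1 j j1 r r1 s s1 := by
  rw [sum_pair_swap]
  conv_lhs => enter [2, x, 2, x1]; rw [sum_pair_swap]
  conv_lhs => enter [2, x, 2, x1, 2, y, 2, y1]; rw [sum_pair_swap]
  rw [sum_pair_swap]
  conv_lhs => enter [2, x, 2, x1]; rw [sum_pair_swap]
  rw [sum_pair_swap]

set_option maxHeartbeats 2000000 in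
/-- In the double cross product `B ⋈ H` of a matched pair of
monoidal Hom-Hopf algebras, the product is Hom-associative:
`(β(a)⋉α(h))((b⋉g)(c⋉f)) = ((a⋉h)(b⋉g))(β(c)⋉α(f))`. -/
theorem doubleCrossProduct_hom_assoc
    {k : Type*} [Field k] {B H : Type*}
    [AddCommGroup B] [Module k B] [AddCommGroup H] [Module k H]
    (Bb : HomHopf k B) (Hh : HomHopf k H)
    (actL : H →ₗ[k] B →ₗ[k] B) (actR : H →ₗ[k] B →ₗ[k] H)
    (mp : MatchedPair Bb Hh actL actR) :
    ∀ (a b c : B) (h g f : H),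
      (dcpMulT Bb.mul Bb.comul Hh.mul Hh.comul actL actR)
        ((Bb.au a ⊗ₜ[k] Hh.au h) ⊗ₜ[k]
          ((dcpMulT Bb.mul Bb.comul Hh.mul Hh.comul actL actR)
            ((b ⊗ₜ[k] g) ⊗ₜ[k] (c ⊗ₜ[k] f))))
      = (dcpMulT Bb.mul Bb.comul Hh.mul Hh.comul actL actR)
          (((dcpMulT Bb.mul Bb.comul Hh.mul Hh.comul actL actR)
              ((a ⊗ₜ[k] h) ⊗ₜ[k] (b ⊗ₜ[k] g))) ⊗ₜ[k] (Bb.au c ⊗ₜ[k] Hh.au f)) := by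
  intro a b c h g f
  rw [lhs_natural mp a b c h g f, rhs_natural mp a b c h g f]
  simp only [Finset.sum_product]
  rw [reorderL (Drep Hh h) (fun p => Drep Hh p.1) (Drep Bb b) (fun j => Drep Bb j.1)
      (Drep Hh g) (fun r => Drep Hh r.1) (Drep Bb c) (fun s => Drep Bb s.1)
      (fun p p1 j j1 r r1 s s1 => phi Bb Hh actL actR a f
        (Hh.au p1.1) (Hh.au p1.2) p.2 (Bb.au j1.1) (Bb.au j1.2) j.2
        (Hh.au r1.1) (Hh.au r1.2) r.2 (Bb.au s1.1) (Bb.au s1.2) s.2),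
    reorderR (Drep Hh h) (fun p => Drep Hh p.2) (Drep Bb b) (fun j => Drep Bb j.2)
      (Drep Hh g) (fun r => Drep Hh r.2) (Drep Bb c) (fun s => Drep Bb s.2)
      (fun p p1 j j1 r r1 s s1 => phi Bb Hh actL actR a f
        p.1 (Hh.au p1.1) (Hh.au p1.2) j.1 (Bb.au j1.1) (Bb.au j1.2)
        r.1 (Hh.au r1.1) (Hh.au r1.2) s.1 (Bb.au s1.1) (Bb.au s1.2))]
  have assembleL : Theta Bb Hh actL actR a f
      (((∑ p ∈ Drep Hh h, ∑ p1 ∈ Drep Hh p.1, Hh.au p1.1 ⊗ₜ[k] (Hh.au p1.2 ⊗ₜ[k] p.2)) ⊗ₜ[k]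
        (∑ j ∈ Drep Bb b, ∑ j1 ∈ Drep Bb j.1, Bb.au j1.1 ⊗ₜ[k] (Bb.au j1.2 ⊗ₜ[k] j.2))) ⊗ₜ[k]
       ((∑ r ∈ Drep Hh g, ∑ r1 ∈ Drep Hh r.1, Hh.au r1.1 ⊗ₜ[k] (Hh.au r1.2 ⊗ₜ[k] r.2)) ⊗ₜ[k]
        (∑ s ∈ Drep Bb c, ∑ s1 ∈ Drep Bb s.1, Bb.au s1.1 ⊗ₜ[k] (Bb.au s1.2 ⊗ₜ[k] s.2))))
      = ∑ p ∈ Drep Hh h, ∑ p1 ∈ Drep Hh p.1, ∑ j ∈ Drep Bb b, ∑ j1 ∈ Drep Bb j.1,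
        ∑ r ∈ Drep Hh g, ∑ r1 ∈ Drep Hh r.1, ∑ s ∈ Drep Bb c, ∑ s1 ∈ Drep Bb s.1,
          phi Bb Hh actL actR a f
            (Hh.au p1.1) (Hh.au p1.2) p.2 (Bb.au j1.1) (Bb.au j1.2) j.2
            (Hh.au r1.1) (Hh.au r1.2) r.2 (Bb.au s1.1) (Bb.au s1.2) s.2 := by
    simp only [TensorProduct.sum_tmul, TensorProduct.tmul_sum, map_sum, Theta_tmul]
    exact reorderBlocks _ _ _ _ _ _ _ _ _
  have assembleR : Theta Bb Hh actL actR a f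
      (((∑ p ∈ Drep Hh h, ∑ p1 ∈ Drep Hh p.2, p.1 ⊗ₜ[k] (Hh.au p1.1 ⊗ₜ[k] Hh.au p1.2)) ⊗ₜ[k]
        (∑ j ∈ Drep Bb b, ∑ j1 ∈ Drep Bb j.2, j.1 ⊗ₜ[k] (Bb.au j1.1 ⊗ₜ[k] Bb.au j1.2))) ⊗ₜ[k]
       ((∑ r ∈ Drep Hh g, ∑ r1 ∈ Drep Hh r.2, r.1 ⊗ₜ[k] (Hh.au r1.1 ⊗ₜ[k] Hh.au r1.2)) ⊗ₜ[k]
        (∑ s ∈ Drep Bb c, ∑ s1 ∈ Drep Bb s.2, s.1 ⊗ₜ[k] (Bb.au s1.1 ⊗ₜ[k] Bb.au s1.2))))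
      = ∑ p ∈ Drep Hh h, ∑ p1 ∈ Drep Hh p.2, ∑ j ∈ Drep Bb b, ∑ j1 ∈ Drep Bb j.2,
        ∑ r ∈ Drep Hh g, ∑ r1 ∈ Drep Hh r.2, ∑ s ∈ Drep Bb c, ∑ s1 ∈ Drep Bb s.2,
          phi Bb Hh actL actR a f
            p.1 (Hh.au p1.1) (Hh.au p1.2) j.1 (Bb.au j1.1) (Bb.au j1.2)
            r.1 (Hh.au r1.1) (Hh.au r1.2) s.1 (Bb.au s1.1) (Bb.au s1.2) := by
    simp only [TensorProduct.sum_tmul, TensorProduct.tmul_sum, map_sum, Theta_tmul]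
    exact reorderBlocks _ _ _ _ _ _ _ _ _
  rw [← assembleL, ← assembleR, tripleEq Hh h, tripleEq Bb b, tripleEq Hh g, tripleEq Bb c]
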